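/- arXiv:0910.0684 — 4 statements merged into one kernel-verified Lean document; each statement's English description precedes it below -/
import Mathlib

section
/- Let A be a commutative ring and let I, J be ideals of A[x₁,…,xₙ]. The ideals I and J define the same solution set in every A-algebra if and only if I = J. -/
open MvPolynomial

universe u

lemma aux_aeval_mk {A : Type u} [CommRing A] {n : ℕ}
    (I : Ideal (MvPolynomial (Fin n) A)) (f : MvPolynomial (Fin n) A) :
    aeval (fun i => Ideal.Quotient.mk I (X i)) f = Ideal.Quotient.mk I f := by
  have h : (aeval (fun i => Ideal.Quotient.mk I (X i)) :
      MvPolynomial (Fin n) A →ₐ[A] _) = Ideal.Quotient.mkₐ A I := by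
    apply MvPolynomial.algHom_ext
    intro i
    simp
  exact AlgHom.congr_fun h f

lemma aux_le {A : Type u} [CommRing A] {n : ℕ}
    (I J : Ideal (MvPolynomial (Fin n) A))
    (h : ∀ (B : Type u) [CommRing B] [Algebra A B],
        ∀ a : Fin n → B, ((∀ f ∈ I, aeval a f = 0) → (∀ f ∈ J, aeval a f = 0))) :
    J ≤ I := by
  intro f hf
  have := h (MvPolynomial (Fin n) A ⧸ I) (fun i => Ideal.Quotient.mk I (X i))
    (fun g hg => by rw [aux_aeval_mk]; exact (Ideal.Quotient.eq_zero_iff_mem).mpr hg)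
    f hf
  rw [aux_aeval_mk] at this
  exact (Ideal.Quotient.eq_zero_iff_mem).mp this

theorem stmt4 {A : Type u} [CommRing A] {n : ℕ}
    (I J : Ideal (MvPolynomial (Fin n) A)) :
    (∀ (B : Type u) [CommRing B] [Algebra A B],
        ∀ a : Fin n → B, ((∀ f ∈ I, aeval a f = 0) ↔ (∀ f ∈ J, aeval a f = 0)))
      ↔ I = J := by
  constructor
  · intro h
    exact le_antisymm (aux_le J I fun B _ _ a => (h B a).mpr)
      (aux_le I J fun B _ _ a => (h B a).mp)
  · rintro rfl
    intro B _ _ a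
    rfl
end

section
/- Let A be a commutative Noetherian ring and I, J ideals of A[x₁,…,xₙ]. Then I and J define the same solution set in every algebraically closed field that is an A-algebra if and only if I and J have the same radical. -/
open MvPolynomial

universe u

set_option synthInstance.maxHeartbeats 1000000
set_option maxHeartbeats 1000000

theorem stmt5 {A : Type u} [CommRing A] [IsNoetherianRing A] {n : ℕ}
    (I J : Ideal (MvPolynomial (Fin n) A)) :
    (∀ (K : Type u) [Field K] [IsAlgClosed K] [Algebra A K],
        ∀ a : Fin n → K, ((∀ f ∈ I, aeval a f = 0) ↔ (∀ f ∈ J, aeval a f = 0)))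
      ↔ I.radical = J.radical := by
  constructor
  · intro h
    have key : ∀ p : Ideal (MvPolynomial (Fin n) A), p.IsPrime → (I ≤ p ↔ J ≤ p) := by
      intro p hp
      haveI := hp
      set R := MvPolynomial (Fin n) A
      set Q := R ⧸ p with hQ
      set F := FractionRing Q with hF
      set K := AlgebraicClosure F with hK
      set φ : R →+* K :=
        ((algebraMap F K).comp (algebraMap Q F)).comp (Ideal.Quotient.mk p) with hφ
      letI : Algebra A K := (φ.comp (algebraMap A R)).toAlgebra
      set a : Fin n → K := fun i => φ (X i) with ha
      have haeval : ∀ f : R, aeval a f = φ f := by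
        have heq : (↑(aeval a : R →ₐ[A] K) : R →+* K) = φ := by
          apply MvPolynomial.ringHom_ext
          · intro r
            simp [RingHom.algebraMap_toAlgebra, algebraMap_eq]
            rw [MvPolynomial.algebraMap_eq]
          · intro i
            simp [ha]
        intro f
        exact RingHom.congr_fun heq f
      have hinj : Function.Injective ((algebraMap F K).comp (algebraMap Q F)) := by
        exact (RingHom.injective (algebraMap F K)).comp (IsFractionRing.injective Q F)
      have hzero : ∀ f : R, (aeval a f = 0 ↔ f ∈ p) := by
        intro f
        rw [haeval, hφ]
        constructor
        · intro hf
          have : Ideal.Quotient.mk p f = 0 := by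
            apply hinj
            simpa using hf
          exact (Ideal.Quotient.eq_zero_iff_mem).mp this
        · intro hf
          simp [Ideal.Quotient.eq_zero_iff_mem.mpr hf]
      have := h K a
      constructor
      · intro hI g hg
        exact (hzero g).mp (this.mp (fun f hf => (hzero f).mpr (hI hf)) g hg)
      · intro hJ g hg
        exact (hzero g).mp (this.mpr (fun f hf => (hzero f).mpr (hJ hf)) g hg)
    rw [Ideal.radical_eq_sInf, Ideal.radical_eq_sInf]
    congr 1
    ext p
    simp only [Set.mem_setOf_eq]
    constructor
    · rintro ⟨h1, h2⟩; exact ⟨(key p h2).mp h1, h2⟩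
    · rintro ⟨h1, h2⟩; exact ⟨(key p h2).mpr h1, h2⟩
  · intro h K _ _ _ a
    haveI : (RingHom.ker (aeval a : MvPolynomial (Fin n) A →ₐ[A] K)).IsPrime :=
      RingHom.ker_isPrime _
    have hIff : ∀ L : Ideal (MvPolynomial (Fin n) A),
        (∀ f ∈ L, aeval a f = 0) ↔ L.radical ≤ RingHom.ker (aeval a : MvPolynomial (Fin n) A →ₐ[A] K) := by
      intro L
      rw [Ideal.IsPrime.radical_le_iff inferInstance]
      rfl
    rw [hIff, hIff, h]
end

section
/- Let A be a commutative ring, I ⊆ A[x₁,…,xₙ] an ideal with quotient B = A[x]/I, and J ⊆ A[y₁,…,yₘ] an ideal with quotient C. Suppose H ⊆ A[x,y] is an ideal such that in every A-algebra D, the zero set of H restricted to (zero set of I) × Dᵐ is the graph of a function from the zero set of I to the zero set of J. Then there exists an m-tuple of polynomials p ∈ A[x]ᵐ such that for every A-algebra D and every a in the zero set of I in Dⁿ, the function sends a to p(a). (Every Zariski-definable map between affine schemes is given by polynomials.) -/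
/-! The image of the generic point `x mod I` of `B = A[x]/I` is some `b ∈ Bᵐ`; lifting its
coordinates to polynomials gives `p`. Any `a ∈ Z(I)(D)` is the image of the generic point under
the `A`-algebra map `B → D`, `x ↦ a`, and pushing the solution `(x mod I, b)` of `H` forward
along this map gives the solution `(a, p(a))`. -/

open MvPolynomial

universe u

namespace MvPolynomial

variable {σ A : Type*} [CommRing A]

theorem aeval_quotient_mk_X_eq_zero (I : Ideal (MvPolynomial σ A)) {f : MvPolynomial σ A}
    (hf : f ∈ I) : aeval (fun i => Ideal.Quotient.mk I (X i)) f = 0 := by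
  rwa [← mkₐ_eq_aeval, Ideal.Quotient.mkₐ_eq_mk, Ideal.Quotient.eq_zero_iff_mem]

theorem aeval_comp_algHom_eq_zero {R S : Type*} [CommSemiring R] [Algebra A R] [CommSemiring S]
    [Algebra A S] (φ : R →ₐ[A] S) {x : σ → R} {f : MvPolynomial σ A} (hf : aeval x f = 0) :
    aeval (φ ∘ x) f = 0 := by
  rw [Function.comp_def, ← comp_aeval_apply, hf, map_zero]

end MvPolynomial

theorem stmt6_general {A : Type u} [CommRing A] {n m : ℕ}
    (I : Ideal (MvPolynomial (Fin n) A))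
    (H : Ideal (MvPolynomial (Fin n ⊕ Fin m) A))
    (hfun : ∀ (D : Type u) [CommRing D] [Algebra A D], ∀ a : Fin n → D,
      (∀ f ∈ I, aeval a f = 0) →
        ∃! b : Fin m → D, ∀ h ∈ H, aeval (Sum.elim a b) h = 0) :
    ∃ p : Fin m → MvPolynomial (Fin n) A,
      ∀ (D : Type u) [CommRing D] [Algebra A D], ∀ a : Fin n → D,
        (∀ f ∈ I, aeval a f = 0) →
          ∀ h ∈ H, aeval (Sum.elim a fun j => aeval a (p j)) h = 0 := by
  obtain ⟨b, hb, -⟩ := hfun _ _ fun f hf => aeval_quotient_mk_X_eq_zero I hf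
  choose p hp using fun j => Ideal.Quotient.mk_surjective (b j)
  refine ⟨p, fun D _ _ a ha h hh => ?_⟩
  let φ := Ideal.Quotient.liftₐ I (aeval a) ha
  have hφ (f : MvPolynomial (Fin n) A) : φ (Ideal.Quotient.mk I f) = aeval a f :=
    Ideal.Quotient.lift_mk _ _ _
  have hpush : Sum.elim a (fun j => aeval a (p j)) =
      φ ∘ Sum.elim (fun i => Ideal.Quotient.mk I (X i)) b := by
    ext (i | j) <;> simp [hφ, ← hp]
  rw [hpush]
  exact aeval_comp_algHom_eq_zero φ (hb h hh)

theorem stmt6 {A : Type u} [CommRing A] {n m : ℕ}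
    (I : Ideal (MvPolynomial (Fin n) A)) (J : Ideal (MvPolynomial (Fin m) A))
    (H : Ideal (MvPolynomial (Fin n ⊕ Fin m) A))
    (hfun : ∀ (D : Type u) [CommRing D] [Algebra A D], ∀ a : Fin n → D,
      (∀ f ∈ I, aeval a f = 0) →
        ∃! b : Fin m → D, ∀ h ∈ H, aeval (Sum.elim a b) h = 0)
    (him : ∀ (D : Type u) [CommRing D] [Algebra A D], ∀ (a : Fin n → D) (b : Fin m → D),
      (∀ f ∈ I, aeval a f = 0) → (∀ h ∈ H, aeval (Sum.elim a b) h = 0) →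
        ∀ g ∈ J, aeval b g = 0) :
    ∃ p : Fin m → MvPolynomial (Fin n) A,
      ∀ (D : Type u) [CommRing D] [Algebra A D], ∀ a : Fin n → D,
        (∀ f ∈ I, aeval a f = 0) →
          ∀ h ∈ H, aeval (Sum.elim a fun j => aeval a (p j)) h = 0 :=
  stmt6_general I H hfun
end

section
/- Let B, B̃, C be commutative Noetherian rings. If the product rings C × B and C × B̃ are isomorphic as rings, then B and B̃ are isomorphic as rings. (Cancellation of direct factors for Noetherian rings.) -/
/-!
A Noetherian ring `R` has finitely many primitive idempotents (atoms of the Boolean algebra of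
idempotents), they sum to `1`, and so `R ≅ ∏ₑ R ⧸ (1 - e)`.
Counting, for each isomorphism class `X`, the primitive idempotents `e` with `R ⧸ (1 - e) ≅ X`
gives a function that determines `R` up to isomorphism. It is an isomorphism invariant and is
additive on products, because the primitive idempotents of `R × S` are the `(e, 0)` and `(0, f)`.
So `C × B ≅ C × B'` gives `count C + count B = count C + count B'`, and cancelling yields
`B ≅ B'`.
-/

open CategoryTheory

universe u

section Atoms

variable {α β : Type*} [PartialOrder α] [PartialOrder β] [OrderBot α] [OrderBot β]

theorem Prod.isAtom_iff {x : α × β} :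
    IsAtom x ↔ IsAtom x.1 ∧ x.2 = ⊥ ∨ IsAtom x.2 ∧ x.1 = ⊥ := by
  simp only [← bot_covBy_iff, Prod.covBy_iff, Prod.fst_bot, Prod.snd_bot, eq_comm]

noncomputable def Prod.atomsEquiv :
    {a : α // IsAtom a} ⊕ {b : β // IsAtom b} ≃ {x : α × β // IsAtom x} :=
  Equiv.ofBijective
    (Sum.elim (fun a => ⟨(a, ⊥), Prod.isAtom_iff.2 (.inl ⟨a.2, rfl⟩)⟩)
      (fun b => ⟨(⊥, b), Prod.isAtom_iff.2 (.inr ⟨b.2, rfl⟩)⟩))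
    ⟨by
      rintro (a | b) (a' | b') h <;>
        simp only [Sum.elim_inl, Sum.elim_inr, Subtype.mk.injEq, Prod.mk.injEq, and_true,
          true_and] at h
      · exact congrArg _ (Subtype.ext h)
      · exact (a.2.1 h.1).elim
      · exact (b.2.1 h.2).elim
      · exact congrArg _ (Subtype.ext h), by
      rintro ⟨x, hx⟩
      rcases Prod.isAtom_iff.1 hx with ⟨ha, hb⟩ | ⟨hb, ha⟩
      · exact ⟨.inl ⟨x.1, ha⟩, Subtype.ext (Prod.ext rfl hb.symm)⟩
      · exact ⟨.inr ⟨x.2, hb⟩, Subtype.ext (Prod.ext ha.symm rfl)⟩⟩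

end Atoms

section Idempotents

variable {R S : Type*} [CommRing R] [CommRing S]

def RingEquiv.idempotentsOrderIso (φ : R ≃+* S) :
    {e : R // IsIdempotentElem e} ≃o {e : S // IsIdempotentElem e} where
  toEquiv := φ.toEquiv.subtypeEquiv fun e =>
    ⟨fun h => h.map φ, fun h => by simpa using h.map φ.symm⟩
  map_rel_iff' {a b} := by
    change φ a * φ b = φ a ↔ a.1 * b = a
    rw [← map_mul, φ.injective.eq_iff]

theorem Prod.isIdempotentElem_iff {x : R × S} :
    IsIdempotentElem x ↔ IsIdempotentElem x.1 ∧ IsIdempotentElem x.2 :=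
  Prod.ext_iff

def idempotentsProdOrderIso :
    {e : R × S // IsIdempotentElem e} ≃o
      {e : R // IsIdempotentElem e} × {e : S // IsIdempotentElem e} where
  toEquiv := (Equiv.subtypeEquivRight fun _ => Prod.isIdempotentElem_iff).trans
    Equiv.subtypeProdEquivProd
  map_rel_iff' {a b} := (Prod.ext_iff (x := a.1 * b.1) (y := a.1)).symm

abbrev PrimitiveIdempotents (R : Type*) [CommRing R] :=
  {e : {e : R // IsIdempotentElem e} // IsAtom e}

theorem PrimitiveIdempotents.val_ne_zero (e : PrimitiveIdempotents R) : e.1.1 ≠ 0 :=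
  fun h => e.2.1 (Subtype.ext h)

theorem PrimitiveIdempotents.mul_eq_zero {e f : PrimitiveIdempotents R} (h : e ≠ f) :
    e.1.1 * f.1.1 = 0 :=
  congrArg Subtype.val (e.2.disjoint_of_ne f.2 (Subtype.coe_injective.ne h)).eq_bot

theorem IsIdempotentElem.dvd_iff {e x : R} (he : IsIdempotentElem e) : e ∣ x ↔ e * x = x :=
  ⟨fun ⟨c, hc⟩ => by rw [hc, ← mul_assoc, he.eq], fun h => ⟨x, h.symm⟩⟩

theorem span_one_sub_le_span_one_sub_iff {e f : R} (he : IsIdempotentElem e) :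
    Ideal.span {1 - f} ≤ Ideal.span {1 - e} ↔ e * f = e := by
  rw [Ideal.span_singleton_le_span_singleton, he.one_sub.dvd_iff]
  constructor <;> intro h <;> linear_combination h

end Idempotents

section ComponentClass

variable {R S : Type u} [CommRing R] [CommRing S]

/-- For idempotent `e`, `R ⧸ (1 - e) ≅ e R` is the factor of `R ≅ e R × (1 - e) R` cut out
by `e`. -/
noncomputable def componentClass (e : R) : Skeleton CommRingCat.{u} :=
  toSkeleton (CommRingCat.of (R ⧸ Ideal.span {1 - e}))

theorem componentClass_eq_componentClass_iff {e : R} {f : S} :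
    componentClass e = componentClass f ↔
      Nonempty ((R ⧸ Ideal.span {1 - e}) ≃+* (S ⧸ Ideal.span {1 - f})) :=
  toSkeleton_eq_toSkeleton_iff.trans
    ⟨fun ⟨i⟩ => ⟨i.commRingCatIsoToRingEquiv⟩, fun ⟨φ⟩ => ⟨φ.toCommRingCatIso⟩⟩

theorem componentClass_map (φ : R ≃+* S) (e : R) : componentClass (φ e) = componentClass e :=
  componentClass_eq_componentClass_iff.2
    ⟨(Ideal.quotientEquiv _ _ φ (by simp [Ideal.map_span])).symm⟩

theorem componentClass_fst (e : R) : componentClass ((e, 0) : R × S) = componentClass e := by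
  let f := (Ideal.Quotient.mk (Ideal.span {1 - e})).comp (RingHom.fst R S)
  have hf : Function.Surjective f :=
    Ideal.Quotient.mk_surjective.comp fun x => ⟨(x, 0), rfl⟩
  have hker : RingHom.ker f = Ideal.span {1 - ((e, 0) : R × S)} := by
    ext x
    simp only [f, RingHom.mem_ker, RingHom.comp_apply, RingHom.coe_fst,
      Ideal.Quotient.eq_zero_iff_mem, Ideal.mem_span_singleton']
    constructor
    · rintro ⟨a, ha⟩
      exact ⟨(a, x.2), Prod.ext (by simpa using ha) (by simp)⟩
    · rintro ⟨a, rfl⟩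
      exact ⟨a.1, by simp⟩
  exact componentClass_eq_componentClass_iff.2
    ⟨(Ideal.quotEquivOfEq hker.symm).trans (RingHom.quotientKerEquivOfSurjective hf)⟩

theorem componentClass_snd (e : S) : componentClass ((0, e) : R × S) = componentClass e := by
  rw [← componentClass_map (RingEquiv.prodComm : R × S ≃+* S × R)]
  exact componentClass_fst e

end ComponentClass

section Noetherian

variable {R : Type*} [CommRing R] [IsNoetherianRing R]

instance : WellFoundedLT {e : R // IsIdempotentElem e} :=
  StrictAnti.wellFoundedLT (f := fun e => Ideal.span {1 - e.1}) fun e f hef =>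
    lt_of_le_not_ge ((span_one_sub_le_span_one_sub_iff e.2).2 hef.le)
      fun h => hef.not_ge ((span_one_sub_le_span_one_sub_iff f.2).1 h)

instance : IsAtomic {e : R // IsIdempotentElem e} :=
  isAtomic_of_orderBot_wellFounded_lt wellFounded_lt

/-- Finitely many atoms `t` generate the ideal spanned by all atoms; an atom outside `t` is
orthogonal to `span t`, which contains it. -/
instance : Finite (PrimitiveIdempotents R) := by
  obtain ⟨t, hts, hspan⟩ := (Submodule.fg_span_iff_fg_span_finset_subset
    (Set.range fun e : PrimitiveIdempotents R => e.1.1)).1 (IsNoetherian.noetherian (R := R) _)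
  have hmem : ∀ e : PrimitiveIdempotents R, e.1.1 ∈ t := by
    intro e
    by_contra he
    have hann : (t : Set R) ⊆ LinearMap.ker (LinearMap.mulLeft R e.1.1) := by
      intro x hx
      obtain ⟨f, rfl⟩ := hts hx
      exact PrimitiveIdempotents.mul_eq_zero (by rintro rfl; exact he hx)
    have hee : e.1.1 * e.1.1 = 0 :=
      Submodule.span_le.2 hann (hspan ▸ Submodule.subset_span ⟨e, rfl⟩)
    exact e.val_ne_zero (e.1.2.eq ▸ hee)
  exact Finite.of_injective (fun e => (⟨e.1.1, hmem e⟩ : t))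
    fun e f h => Subtype.ext (Subtype.ext (Subtype.mk.inj h))

theorem completeOrthogonalIdempotents_primitiveIdempotents [Fintype (PrimitiveIdempotents R)] :
    CompleteOrthogonalIdempotents fun e : PrimitiveIdempotents R => e.1.1 := by
  have ortho : OrthogonalIdempotents fun e : PrimitiveIdempotents R => e.1.1 :=
    ⟨fun e => e.1.2, fun _ _ => PrimitiveIdempotents.mul_eq_zero⟩
  refine ⟨ortho, ?_⟩
  set s := ∑ e : PrimitiveIdempotents R, e.1.1
  by_contra hs
  let c : {e : R // IsIdempotentElem e} := ⟨1 - s, ortho.isIdempotentElem_sum.one_sub⟩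
  have hc : c ≠ ⊥ := fun h => hs (sub_eq_zero.1 (congrArg Subtype.val h)).symm
  obtain ⟨a, ha, hle⟩ := (eq_bot_or_exists_atom_le c).resolve_left hc
  have has : a.1 * s = a.1 := ortho.mul_sum_of_mem (i := ⟨a, ha⟩) (Finset.mem_univ _)
  have hac : a.1 * (1 - s) = a.1 := hle
  exact PrimitiveIdempotents.val_ne_zero ⟨a, ha⟩ (by linear_combination -hac - has)

variable (R) in
noncomputable def ringEquivPiQuotientPrimitive [Fintype (PrimitiveIdempotents R)] :
    R ≃+* ∀ e : PrimitiveIdempotents R, R ⧸ Ideal.span {1 - e.1.1} :=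
  RingEquiv.ofBijective _ completeOrthogonalIdempotents_primitiveIdempotents.bijective_pi

end Noetherian

section Multiplicity

variable {R S : Type u} [CommRing R] [CommRing S]

variable (R) in
noncomputable def componentMultiplicity (X : Skeleton CommRingCat.{u}) : ℕ :=
  Nat.card {e : PrimitiveIdempotents R // componentClass e.1.1 = X}

theorem componentMultiplicity_congr (φ : R ≃+* S) :
    componentMultiplicity R = componentMultiplicity S := by
  let σ : PrimitiveIdempotents R ≃ PrimitiveIdempotents S :=
    φ.idempotentsOrderIso.toEquiv.subtypeEquiv fun e => (φ.idempotentsOrderIso.isAtom_iff e).symm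
  funext X
  exact Nat.card_congr (σ.subtypeEquiv fun e => by rw [← componentClass_map φ]; rfl)

theorem componentMultiplicity_prod [IsNoetherianRing R] [IsNoetherianRing S] :
    componentMultiplicity (R × S) = componentMultiplicity R + componentMultiplicity S := by
  let σ : PrimitiveIdempotents R ⊕ PrimitiveIdempotents S ≃ PrimitiveIdempotents (R × S) :=
    Prod.atomsEquiv.trans <| idempotentsProdOrderIso.symm.toEquiv.subtypeEquiv fun x =>
      (idempotentsProdOrderIso.symm.isAtom_iff x).symm
  have hσ : ∀ p, componentClass (σ p).1.1 =
      Sum.elim (fun e => componentClass e.1.1) (fun e => componentClass e.1.1) p := by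
    rintro (e | e)
    · exact componentClass_fst e.1.1
    · exact componentClass_snd e.1.1
  funext X
  calc Nat.card {e : PrimitiveIdempotents (R × S) // componentClass e.1.1 = X}
      = Nat.card {p // Sum.elim (fun e : PrimitiveIdempotents R => componentClass e.1.1)
          (fun e : PrimitiveIdempotents S => componentClass e.1.1) p = X} :=
        (Nat.card_congr (σ.subtypeEquiv fun p => by rw [hσ])).symm
    _ = componentMultiplicity R X + componentMultiplicity S X :=
        (Nat.card_congr Equiv.subtypeSum).trans Nat.card_sum

theorem nonempty_ringEquiv_of_componentMultiplicity_eq [IsNoetherianRing R] [IsNoetherianRing S]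
    (h : componentMultiplicity R = componentMultiplicity S) : Nonempty (R ≃+* S) := by
  have := Fintype.ofFinite (PrimitiveIdempotents R)
  have := Fintype.ofFinite (PrimitiveIdempotents S)
  have fiberEquiv (X) : {e : PrimitiveIdempotents R // componentClass e.1.1 = X} ≃
      {e : PrimitiveIdempotents S // componentClass e.1.1 = X} :=
    (Finite.card_eq.1 (congrFun h X)).some
  let σ := Equiv.ofFiberEquiv fiberEquiv
  have hσ (e : PrimitiveIdempotents R) : componentClass e.1.1 = componentClass (σ e).1.1 :=
    (Equiv.ofFiberEquiv_map fiberEquiv e).symm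
  have τ (e : PrimitiveIdempotents R) :
      (R ⧸ Ideal.span {1 - e.1.1}) ≃+* (S ⧸ Ideal.span {1 - (σ e).1.1}) :=
    (componentClass_eq_componentClass_iff.1 (hσ e)).some
  exact ⟨(ringEquivPiQuotientPrimitive R).trans <| (RingEquiv.piCongrRight τ).trans <|
    (RingEquiv.piCongrLeft _ σ).trans (ringEquivPiQuotientPrimitive S).symm⟩

end Multiplicity

instance {R : Type*} [CommRing R] [IsNoetherianRing R] : IsNoetherianRing (ULift R) :=
  isNoetherianRing_of_ringEquiv R ULift.ringEquiv.symm

theorem nonempty_ringEquiv_of_prod_ringEquiv_prod {B B' C : Type u} [CommRing B] [CommRing B']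
    [CommRing C] [IsNoetherianRing B] [IsNoetherianRing B'] [IsNoetherianRing C]
    (φ : C × B ≃+* C × B') : Nonempty (B ≃+* B') := by
  have h := componentMultiplicity_congr φ
  rw [componentMultiplicity_prod, componentMultiplicity_prod] at h
  exact nonempty_ringEquiv_of_componentMultiplicity_eq (add_left_cancel h)

theorem stmt17 {B B' C : Type*} [CommRing B] [CommRing B'] [CommRing C]
    [IsNoetherianRing B] [IsNoetherianRing B'] [IsNoetherianRing C]
    (h : Nonempty ((C × B) ≃+* (C × B'))) : Nonempty (B ≃+* B') := by
  obtain ⟨φ⟩ := h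
  -- pass to a common universe, where the components of all three rings live in one skeleton
  obtain ⟨ψ⟩ := nonempty_ringEquiv_of_prod_ringEquiv_prod
    ((RingEquiv.prodCongr ULift.ringEquiv ULift.ringEquiv).trans <|
      φ.trans (RingEquiv.prodCongr ULift.ringEquiv.symm ULift.ringEquiv.symm) :
      ULift.{max u_1 u_2 u_3} C × ULift.{max u_1 u_2 u_3} B ≃+* ULift C × ULift B')
  exact ⟨ULift.ringEquiv.symm.trans (ψ.trans ULift.ringEquiv)⟩
end
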